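/- arXiv:1204.5203 — 2 statements merged into one kernel-verified Lean document; each statement's English description precedes it below -/
import Mathlib

section
/- Let n ≥ 2 and let f : 𝔽₂ⁿ → 𝔽₂ be nested canalizing. Then f can be written in the layered form f = M₁(M₂(⋯(M_{r−1}(M_r ⊕ 1) ⊕ 1)⋯) ⊕ 1) ⊕ b, where each M_i is an extended monomial in k_i variables, the variable sets of the M_i are pairwise disjoint and together comprise all n variables, k_i ≥ 1 for i = 1,…,r−1, k_r ≥ 2, and k₁ + ⋯ + k_r = n. -/
/-- `f` is nested canalizing in the variable order `σ(0), σ(1), …, σ(n-1)`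
with canalizing input values `a` and canalized output values `b`:
`f x = b k` whenever `x (σ j) = a j + 1` for all `j < k` and `x (σ k) = a k`,
and `f x = b (last) + 1` whenever `x (σ j) = a j + 1` for all `j`. -/
def IsNCF {n : ℕ} (f : (Fin n → ZMod 2) → ZMod 2) (σ : Equiv.Perm (Fin n))
    (a b : Fin n → ZMod 2) : Prop :=
  (∀ (k : Fin n) (x : Fin n → ZMod 2),
      (∀ j : Fin n, j < k → x (σ j) = a j + 1) → x (σ k) = a k → f x = b k) ∧
  (∀ k : Fin n, (∀ j : Fin n, j ≤ k) →
      ∀ x : Fin n → ZMod 2, (∀ j : Fin n, x (σ j) = a j + 1) → f x = b k + 1)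

/-- The nested expression `M i * (M (i+1) * ( … * (M (i+t-1) + 1) … ) + 1)`
with `t` factors, i.e. `nestVal M t i = Mᵢ(M_{i+1}(⋯(M_{i+t-1} ⊕ 1)⋯) ⊕ 1)`. -/
def nestVal (M : ℕ → ZMod 2) : ℕ → ℕ → ZMod 2
  | 0, _ => 0
  | 1, i => M i
  | (t + 2), i => M i * (nestVal M (t + 1) (i + 1) + 1)

/-- The extended monomial of the `i`-th layer, given the layer assignment `L`
and the complemented inputs `a`:  `Mᵢ(x) = ∏_{L j = i} (x j ⊕ a j)`. -/
def layerMon {n r : ℕ} (L : Fin n → Fin r) (a : Fin n → ZMod 2) (i : ℕ)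
    (x : Fin n → ZMod 2) : ZMod 2 :=
  ∏ j ∈ Finset.univ.filter (fun j : Fin n => (L j : ℕ) = i), (x j + a j)

/-- `kᵢ`, the number of variables in the `i`-th layer. -/
def layerSize {n r : ℕ} (L : Fin n → Fin r) (i : ℕ) : ℕ :=
  (Finset.univ.filter (fun j : Fin n => (L j : ℕ) = i)).card

/-- `K_l = k₀ + k₁ + ⋯ + k_{l-1}`, the number of variables in the first `l` layers. -/
def layerSum {n r : ℕ} (L : Fin n → Fin r) (l : ℕ) : ℕ :=
  ∑ i ∈ Finset.range l, layerSize L i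

/-- `f` is given in the layered form
`f = M₁(M₂(⋯(M_{r−1}(M_r ⊕ 1) ⊕ 1)⋯) ⊕ 1) ⊕ b`, where the `Mᵢ` are extended
monomials in pairwise disjoint sets of variables comprising all `n` variables
(the variable set of `Mᵢ` being the `i`-th layer `{j | L j = i}`), every layer
is nonempty, and the last layer has at least two variables. -/
def IsLayeredForm {n r : ℕ} (f : (Fin n → ZMod 2) → ZMod 2)
    (L : Fin n → Fin r) (a : Fin n → ZMod 2) (b : ZMod 2) : Prop :=
  1 ≤ r ∧
  (∀ i : Fin r, 1 ≤ layerSize L (i : ℕ)) ∧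
  2 ≤ layerSize L (r - 1) ∧
  ∀ x : Fin n → ZMod 2, f x = nestVal (fun i => layerMon L a i x) r 0 + b

/-!
Order the variables by canalizing priority `σ 0, σ 1, …, σ (n-1)` and cut this order into the
maximal blocks on which the canalized output `b` is constant; these blocks are the layers, and
`Mᵢ` vanishes exactly when some variable of layer `i` takes its canalizing value. If the first
canalizing variable lies in layer `l`, the nested expression evaluates to `l mod 2`, and `b` has
changed `l` times before it, so `f x = b₀ + l`; if no variable canalizes, both sides are
`b₀ + r`. Complementing `a` and `b` at the last variable still presents `f` as nested
canalizing, so we may assume that the last two outputs agree, which puts the last two variables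
into the same layer.
-/

open Finset

lemma ZMod.eq_add_one_of_ne_two {u v : ZMod 2} (h : u ≠ v) : u = v + 1 := by
  revert u v; decide

section ChangeCount

variable {α : Type*} [DecidableEq α] (d : ℕ → α)

def changeCount (k : ℕ) : ℕ := #{m ∈ range k | d m ≠ d (m + 1)}

@[simp] lemma changeCount_zero : changeCount d 0 = 0 := rfl

lemma changeCount_succ (k : ℕ) :
    changeCount d (k + 1) = changeCount d k + if d k ≠ d (k + 1) then 1 else 0 := by
  simp only [changeCount, range_add_one, filter_insert]
  split_ifs
  · exact card_insert_of_notMem (by simp)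
  · rfl

lemma changeCount_mono : Monotone (changeCount d) := fun _ _ h =>
  card_le_card (filter_subset_filter _ (range_subset_range.2 h))

lemma exists_changeCount_eq {K i : ℕ} (hi : i ≤ changeCount d K) :
    ∃ k ≤ K, changeCount d k = i := by
  induction K with
  | zero => exact ⟨0, le_rfl, by simp_all⟩
  | succ K ih =>
    rcases le_or_gt i (changeCount d K) with hK | hK
    · obtain ⟨k, hk, rfl⟩ := ih hK
      exact ⟨k, by omega, rfl⟩
    · refine ⟨K + 1, le_rfl, ?_⟩
      rw [changeCount_succ] at hi ⊢
      split_ifs at hi ⊢ <;> omega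

lemma eq_add_changeCount (d : ℕ → ZMod 2) (k : ℕ) : d k = d 0 + changeCount d k := by
  induction k with
  | zero => simp
  | succ k ih =>
    rw [changeCount_succ]
    by_cases hk : d k = d (k + 1)
    · rw [if_neg (not_not.2 hk), ← hk, ih, add_zero]
    · rw [if_pos hk, ZMod.eq_add_one_of_ne_two (Ne.symm hk), ih]
      push_cast
      ring

end ChangeCount

lemma nestVal_eq_of_forall_eq_one (M : ℕ → ZMod 2) :
    ∀ {t i : ℕ}, (∀ m < t, M (i + m) = 1) → nestVal M t i = t
  | 0, _, _ => rfl
  | 1, _, h => by simpa [nestVal] using h 0 one_pos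
  | t + 2, i, h => by
    have ih : nestVal M (t + 1) (i + 1) = (t + 1 : ℕ) :=
      nestVal_eq_of_forall_eq_one M fun m hm => by
        simpa [add_assoc, add_comm 1 m] using h (m + 1) (by omega)
    rw [nestVal, ih, show M i = 1 by simpa using h 0 (by omega)]
    push_cast
    ring

lemma nestVal_eq_of_eq_zero (M : ℕ → ZMod 2) :
    ∀ {t i l : ℕ}, l < t → (∀ m < l, M (i + m) = 1) → M (i + l) = 0 → nestVal M t i = l
  | 1, _, 0, _, _, h0 => by simpa [nestVal] using h0
  | t + 2, _, 0, _, _, h0 => by simp_all [nestVal]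
  | t + 2, i, l + 1, hl, h1, h0 => by
    have ih : nestVal M (t + 1) (i + 1) = l :=
      nestVal_eq_of_eq_zero M (by omega)
        (fun m hm => by simpa [add_assoc, add_comm 1 m] using h1 (m + 1) (by omega))
        (by simpa [add_assoc, add_comm 1 l] using h0)
    rw [nestVal, ih, show M i = 1 by simpa using h1 0 (by omega)]
    push_cast
    ring

section LayerMon

variable {n r : ℕ} {L : Fin n → Fin r} {a x : Fin n → ZMod 2} {i : ℕ}

lemma layerMon_eq_one (h : ∀ j, (L j : ℕ) = i → x j = a j + 1) : layerMon L a i x = 1 :=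
  prod_eq_one fun j hj => by
    rw [h j (mem_filter.1 hj).2, add_right_comm, CharTwo.add_self_eq_zero, zero_add]

lemma layerMon_eq_zero {j : Fin n} (hj : (L j : ℕ) = i) (hx : x j = a j) :
    layerMon L a i x = 0 :=
  prod_eq_zero (mem_filter.2 ⟨mem_univ j, hj⟩) (by rw [hx, CharTwo.add_self_eq_zero])

end LayerMon

section Layers

variable {n : ℕ} (σ : Equiv.Perm (Fin n)) (b : Fin n → ZMod 2)

noncomputable def outputSeq : ℕ → ZMod 2 := Function.extend Fin.val b 0

lemma outputSeq_val (k : Fin n) : outputSeq b k = b k :=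
  Fin.val_injective.extend_apply b 0 k

noncomputable def layerIndex : ℕ → ℕ := changeCount (outputSeq b)

lemma eq_add_layerIndex (k : Fin n) : b k = outputSeq b 0 + layerIndex b k := by
  rw [← outputSeq_val b k]
  exact eq_add_changeCount _ _

noncomputable def numLayers : ℕ := layerIndex b (n - 1) + 1

lemma layerIndex_lt_numLayers (k : Fin n) : layerIndex b k < numLayers b :=
  Nat.lt_succ_of_le (changeCount_mono _ (by omega))

noncomputable def ncfLayer (j : Fin n) : Fin (numLayers b) :=
  ⟨_, layerIndex_lt_numLayers b (σ.symm j)⟩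

@[simp] lemma ncfLayer_apply (k : Fin n) : (ncfLayer σ b (σ k) : ℕ) = layerIndex b k := by
  simp [ncfLayer]

lemma one_le_layerSize_ncfLayer (hn : 0 < n) (i : Fin (numLayers b)) :
    1 ≤ layerSize (ncfLayer σ b) i := by
  obtain ⟨k, hk, hki⟩ := exists_changeCount_eq (outputSeq b) (Nat.lt_succ_iff.1 i.isLt)
  exact card_pos.2
    ⟨σ ⟨k, by omega⟩, mem_filter.2 ⟨mem_univ _, (ncfLayer_apply σ b _).trans hki⟩⟩

lemma two_le_layerSize_ncfLayer (hn : 2 ≤ n)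
    (hb : b ⟨n - 1, by omega⟩ = b ⟨n - 2, by omega⟩) :
    2 ≤ layerSize (ncfLayer σ b) (numLayers b - 1) := by
  have hsame : layerIndex b (n - 2) = layerIndex b (n - 1) := by
    have hsucc := changeCount_succ (outputSeq b) (n - 2)
    have e₁ : outputSeq b (n - 1) = b ⟨n - 1, by omega⟩ :=
      outputSeq_val b ⟨n - 1, by omega⟩
    have e₂ : outputSeq b (n - 2) = b ⟨n - 2, by omega⟩ :=
      outputSeq_val b ⟨n - 2, by omega⟩
    rw [show n - 2 + 1 = n - 1 by omega, e₁, e₂, hb, if_neg (not_not.2 rfl), add_zero] at hsucc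
    exact hsucc.symm
  refine one_lt_card.2 ⟨σ ⟨n - 2, by omega⟩, ?_, σ ⟨n - 1, by omega⟩, ?_, ?_⟩
  · simpa [numLayers] using hsame
  · simp [numLayers]
  · exact σ.injective.ne (Fin.ne_of_val_ne (by simp; omega))

end Layers

section NCF

variable {n : ℕ} {f : (Fin n → ZMod 2) → ZMod 2} {σ : Equiv.Perm (Fin n)}
  {a b : Fin n → ZMod 2}

lemma IsNCF.update_last (h : IsNCF f σ a b) {last : Fin n} (hlast : ∀ j, j ≤ last) :
    IsNCF f σ (Function.update a last (a last + 1)) (Function.update b last (b last + 1)) := by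
  have hlt {j : Fin n} : j < last ↔ j ≠ last := (hlast j).lt_iff_ne
  constructor
  · intro k x hpre hk
    rcases eq_or_ne k last with rfl | hk'
    · rw [Function.update_self]
      refine h.2 k hlast x fun j => ?_
      rcases eq_or_ne j k with rfl | hj
      · simpa using hk
      · simpa [hj] using hpre j (hlt.2 hj)
    · rw [Function.update_of_ne hk']
      refine h.1 k x (fun j hj => ?_) (by simpa [hk'] using hk)
      simpa [hlt.1 (hj.trans_le (hlast k))] using hpre j hj
  · intro k hk x hall
    obtain rfl : k = last := (hlast k).antisymm (hk last)
    rw [Function.update_self, add_assoc, CharTwo.add_self_eq_zero, add_zero]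
    refine h.1 k x (fun j hj => by simpa [hj.ne] using hall j) ?_
    simpa [add_assoc, CharTwo.add_self_eq_zero] using hall k

lemma IsNCF.exists_last_eq (hn : 2 ≤ n) (h : IsNCF f σ a b) :
    ∃ a' b', IsNCF f σ a' b' ∧ b' ⟨n - 1, by omega⟩ = b' ⟨n - 2, by omega⟩ := by
  by_cases hb : b ⟨n - 1, by omega⟩ = b ⟨n - 2, by omega⟩
  · exact ⟨a, b, h, hb⟩
  · refine ⟨_, _, h.update_last (last := ⟨n - 1, by omega⟩)
      fun j => Fin.le_def.2 (Nat.le_sub_one_of_lt j.isLt), ?_⟩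
    rw [Function.update_self, Function.update_of_ne (by simp; omega),
      ZMod.eq_add_one_of_ne_two hb, add_assoc, CharTwo.add_self_eq_zero, add_zero]

lemma IsNCF.eq_nestVal (h : IsNCF f σ a b) (hn : 0 < n) (x : Fin n → ZMod 2) :
    f x = nestVal (fun i => layerMon (ncfLayer σ b) (fun j => a (σ.symm j)) i x)
      (numLayers b) 0 + outputSeq b 0 := by
  have hM_one {i : ℕ} (hi : ∀ k : Fin n, layerIndex b k = i → x (σ k) = a k + 1) :
      layerMon (ncfLayer σ b) (fun j => a (σ.symm j)) (0 + i) x = 1 :=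
    (zero_add i).symm ▸ layerMon_eq_one fun j hj => by
      simpa using hi (σ.symm j) (by simpa [ncfLayer] using hj)
  by_cases hex : ∃ k, x (σ k) = a k
  · obtain ⟨k, hk, hmin⟩ := WellFounded.has_min wellFounded_lt {k | x (σ k) = a k} hex
    have hpre (j : Fin n) (hj : j < k) : x (σ j) = a j + 1 :=
      ZMod.eq_add_one_of_ne_two fun hj' => hmin j hj' hj
    have hlayer (j : Fin n) (hj : layerIndex b j < layerIndex b k) : j < k :=
      lt_of_not_ge fun hkj => hj.not_ge (changeCount_mono _ hkj)
    rw [h.1 k x hpre hk, eq_add_layerIndex b k, add_comm,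
      nestVal_eq_of_eq_zero _ (layerIndex_lt_numLayers b k)
        (fun m hm => hM_one fun j hj => hpre j (hlayer j (hj ▸ hm)))
        (layerMon_eq_zero (j := σ k) (by simp) (by simpa using hk))]
  · have hall (j : Fin n) : x (σ j) = a j + 1 :=
      ZMod.eq_add_one_of_ne_two fun hj => hex ⟨j, hj⟩
    rw [h.2 ⟨n - 1, by omega⟩ (fun j => Fin.mk_le_mk.2 (by omega)) x hall, eq_add_layerIndex b,
      nestVal_eq_of_forall_eq_one _ fun _ _ => hM_one fun j _ => hall j, numLayers]
    push_cast
    ring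

theorem IsNCF.isLayeredForm (hn : 2 ≤ n) (h : IsNCF f σ a b)
    (hb : b ⟨n - 1, by omega⟩ = b ⟨n - 2, by omega⟩) :
    IsLayeredForm f (ncfLayer σ b) (fun j => a (σ.symm j)) (outputSeq b 0) :=
  ⟨Nat.succ_pos _, one_le_layerSize_ncfLayer σ b (by omega),
    two_le_layerSize_ncfLayer σ b hn hb, h.eq_nestVal (by omega)⟩

end NCF

/-- Every nested canalizing function (n ≥ 2) can be written in the layered
form `f = M₁(M₂(⋯(M_{r−1}(M_r ⊕ 1) ⊕ 1)⋯) ⊕ 1) ⊕ b` with extended monomials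
`Mᵢ` in pairwise disjoint variable sets comprising all `n` variables, all
layers nonempty and the last layer of size at least 2. -/
theorem statement4 {n : ℕ} (hn : 2 ≤ n) (f : (Fin n → ZMod 2) → ZMod 2)
    (hf : ∃ (σ : Equiv.Perm (Fin n)) (a b : Fin n → ZMod 2), IsNCF f σ a b) :
    ∃ (r : ℕ) (L : Fin n → Fin r) (a : Fin n → ZMod 2) (b : ZMod 2),
      IsLayeredForm f L a b := by
  obtain ⟨σ, a, b, h⟩ := hf
  obtain ⟨a', b', h', hb'⟩ := h.exists_last_eq hn
  exact ⟨_, _, _, _, h'.isLayeredForm hn hb'⟩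
end

section
/- For n ≥ 2, the total number of nested canalizing functions f : 𝔽₂ⁿ → 𝔽₂ (in n essential variables) is |NCF(n)| = 2^{n+1} · Σ_{r=1}^{n−1} Σ n!/(k₁!·k₂!⋯k_r!), where the inner sum is over all tuples (k₁,…,k_r) of positive integers with k₁ + ⋯ + k_r = n and k_r ≥ 2. -/
/-!
A layered form can be read off from `f`. Among the inputs that take the non-canalizing value
`a j + 1` on all variables of the first `i` layers, `f` is constant on `{x | x j = α}` (for `j`
not in those layers) exactly when `j` lies in layer `i` and `α = a j`: otherwise two such inputs
escape the nesting one layer apart, so their values differ by `1`. By induction on `i` the layers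
and `a` are determined, then `r` and `b`. So nested canalizing functions correspond bijectively to
the data `(r, L, a, b)`: `2^(n+1)` choices of `(a, b)`, and for each admissible vector of layer
sizes `k` there are `n! / ∏ kᵢ!` layer assignments `L` with these fibre sizes, by orbit-stabilizer
for the permutations of the variables acting on `L`.
-/

open Finset Equiv

section FiberCount

variable {α ι : Type*} [Fintype α] [DecidableEq ι]

lemma exists_card_fiber_eq [Fintype ι] (k : ι → ℕ) (hk : ∑ i, k i = Fintype.card α) :
    ∃ L : α → ι, ∀ i, Fintype.card {a // L a = i} = k i := by
  let e : (Σ i, Fin (k i)) ≃ α := Fintype.equivOfCardEq (by simp [hk])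
  refine ⟨fun a => (e.symm a).1, fun i => ?_⟩
  simpa using Fintype.card_congr ((e.symm.subtypeEquiv fun _ => Iff.rfl).trans (sigmaSubtype i))

lemma exists_perm_comp_eq {L L' : α → ι}
    (h : ∀ i, Fintype.card {a // L' a = i} = Fintype.card {a // L a = i}) :
    ∃ σ : Perm α, L ∘ σ = L' := by
  let e i : {a // L' a = i} ≃ {a // L a = i} := Fintype.equivOfCardEq (h i)
  exact ⟨(sigmaFiberEquiv L').symm.trans ((sigmaCongrRight e).trans (sigmaFiberEquiv L)),
    funext fun a => (e (L' a) ⟨a, rfl⟩).2⟩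

lemma orbit_domMulAct_perm (L₀ : α → ι) :
    MulAction.orbit (Perm α)ᵈᵐᵃ L₀ =
      {L | ∀ i, Fintype.card {a // L a = i} = Fintype.card {a // L₀ a = i}} := by
  ext L
  constructor
  · rintro ⟨σ, rfl⟩ i
    exact Fintype.card_congr ((DomMulAct.mk.symm σ).subtypeEquiv fun _ => Iff.rfl)
  · intro h
    obtain ⟨σ, rfl⟩ := exists_perm_comp_eq h
    exact ⟨DomMulAct.mk σ, rfl⟩

theorem card_filter_card_fiber_eq [DecidableEq α] [Fintype ι] (k : ι → ℕ)
    (hk : ∑ i, k i = Fintype.card α) :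
    #{L : α → ι | ∀ i, Fintype.card {a // L a = i} = k i} = Nat.multinomial univ k := by
  obtain ⟨L₀, hL₀⟩ := exists_card_fiber_eq k hk
  have horbit : (MulAction.orbit (Perm α)ᵈᵐᵃ L₀).ncard =
      #{L : α → ι | ∀ i, Fintype.card {a // L a = i} = k i} := by
    rw [orbit_domMulAct_perm, ← Set.ncard_coe_finset, coe_filter]
    simp [hL₀]
  have hstab : Nat.card (MulAction.stabilizer (Perm α)ᵈᵐᵃ L₀) = ∏ i, (k i).factorial := by
    rw [Nat.card_congr (DomMulAct.mk.symm.subtypeEquiv (p := (· ∈ _))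
        (q := fun g : Perm α => L₀ ∘ g = L₀) fun _ => DomMulAct.mem_stabilizer_iff),
      Nat.card_eq_fintype_card, DomMulAct.stabilizer_card]
    simp only [hL₀]
  have orbit_stabilizer := (MulAction.stabilizer (Perm α)ᵈᵐᵃ L₀).card_mul_index
  rw [MulAction.index_stabilizer, hstab, horbit, Nat.card_congr DomMulAct.mk.symm,
    Nat.card_perm, Nat.card_eq_fintype_card, ← hk, ← Nat.multinomial_spec] at orbit_stabilizer
  exact Nat.eq_of_mul_eq_mul_left (prod_pos fun i _ => (k i).factorial_pos) orbit_stabilizer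

end FiberCount

lemma nestVal_eq_of_leading_ones {M : ℕ → ZMod 2} {m t i : ℕ} (ht : 1 ≤ t) (hm : m ≤ t)
    (hone : ∀ s < m, M (i + s) = 1) (hzero : m < t → M (i + m) = 0) :
    nestVal M t i = m := by
  induction m generalizing t i with
  | zero =>
    obtain ⟨t, rfl⟩ : ∃ s, t = s + 1 := ⟨t - 1, by omega⟩
    have hMi : M i = 0 := hzero (by omega)
    cases t <;> simp [nestVal, hMi]
  | succ m ih =>
    have hMi : M i = 1 := hone 0 (by omega)
    obtain ⟨t, rfl⟩ : ∃ s, t = s + 1 := ⟨t - 1, by omega⟩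
    cases t with
    | zero => simp [nestVal, hMi, show m = 0 by omega]
    | succ t =>
      have hrest : nestVal M (t + 1) (i + 1) = m :=
        ih (by omega) (by omega)
          (fun s hs => by simpa [add_assoc, add_comm 1] using hone (s + 1) (by omega))
          (fun hmt => by simpa [add_assoc, add_comm 1] using hzero (by omega))
      simp [nestVal, hMi, hrest]

lemma ZMod.two_eq_add_one_of_ne {x y : ZMod 2} (h : x ≠ y) : x = y + 1 := by
  revert x y; decide

lemma ZMod.two_add_one_add_self (x : ZMod 2) : x + 1 + x = 1 := by
  revert x; decide

lemma ZMod.two_natCast_succ_add_ne (c : ℕ) (b : ZMod 2) : ((c + 1 : ℕ) : ZMod 2) + b ≠ c + b := by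
  push_cast
  generalize (c : ZMod 2) = x
  revert x b; decide

section LayeredForm

variable {n r : ℕ} {f : (Fin n → ZMod 2) → ZMod 2} {L : Fin n → Fin r} {a : Fin n → ZMod 2}
  {b : ZMod 2}

def PassesLayers (L : Fin n → Fin r) (a : Fin n → ZMod 2) (i : ℕ) (x : Fin n → ZMod 2) : Prop :=
  ∀ j, (L j : ℕ) < i → x j = a j + 1

def CanalizesOn (f : (Fin n → ZMod 2) → ZMod 2) (P : (Fin n → ZMod 2) → Prop) (j : Fin n)
    (α : ZMod 2) : Prop :=
  ∀ x y, P x → P y → x j = α → y j = α → f x = f y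

def hitPoint (a : Fin n → ZMod 2) (S : Finset (Fin n)) : Fin n → ZMod 2 :=
  fun j => if j ∈ S then a j else a j + 1

lemma exists_of_one_le_layerSize {i : ℕ} (h : 1 ≤ layerSize L i) : ∃ j, (L j : ℕ) = i := by
  obtain ⟨j, hj⟩ := card_pos.mp h
  exact ⟨j, (mem_filter.mp hj).2⟩

lemma passesLayers_hitPoint {S : Finset (Fin n)} {m : ℕ} (hS : ∀ j ∈ S, m ≤ (L j : ℕ)) :
    PassesLayers L a m (hitPoint a S) := fun j hj => if_neg fun hjS => by
  have := hS j hjS; omega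

lemma IsLayeredForm.apply_eq (h : IsLayeredForm f L a b) {m : ℕ} (hm : m ≤ r)
    {x : Fin n → ZMod 2} (hpass : PassesLayers L a m x)
    (hstop : m < r → ∃ j, (L j : ℕ) = m ∧ x j = a j) : f x = m + b := by
  rw [h.2.2.2 x]
  congr 1
  refine nestVal_eq_of_leading_ones h.1 hm (fun s hs => prod_eq_one fun j hj => ?_) fun hmr => ?_
  · rw [hpass j (by simp only [zero_add, mem_filter, mem_univ, true_and] at hj; omega)]
    exact ZMod.two_add_one_add_self _
  · obtain ⟨j, hj, hxj⟩ := hstop hmr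
    exact prod_eq_zero (i := j) (by simpa using hj) (by rw [hxj]; exact CharTwo.add_self_eq_zero _)

lemma IsLayeredForm.apply_hitPoint (h : IsLayeredForm f L a b) {S : Finset (Fin n)} {m : ℕ}
    (hm : m ≤ r) (hS : ∀ j ∈ S, m ≤ (L j : ℕ)) (hstop : m < r → ∃ j ∈ S, (L j : ℕ) = m) :
    f (hitPoint a S) = m + b :=
  h.apply_eq hm (passesLayers_hitPoint hS) fun hmr => by
    obtain ⟨j, hjS, hj⟩ := hstop hmr
    exact ⟨j, hj, if_pos hjS⟩

lemma IsLayeredForm.exists_hitPoints_of_ne (h : IsLayeredForm f L a b) {i : ℕ} {j : Fin n}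
    (hj : i ≤ (L j : ℕ)) {α : ZMod 2} (hne : ¬((L j : ℕ) = i ∧ α = a j)) :
    ∃ (c : ℕ) (S T : Finset (Fin n)),
      (∀ k ∈ S, i ≤ (L k : ℕ)) ∧ (∀ k ∈ T, i ≤ (L k : ℕ)) ∧
      hitPoint a S j = α ∧ hitPoint a T j = α ∧
      f (hitPoint a S) = (c + 1 : ℕ) + b ∧ f (hitPoint a T) = c + b := by
  have hjr := (L j).isLt
  rcases eq_or_ne α (a j) with rfl | hα
  · have hlt : i < (L j : ℕ) := lt_of_le_of_ne hj fun e => hne ⟨e.symm, rfl⟩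
    obtain ⟨j₁, hj₁⟩ : ∃ j₁, (L j₁ : ℕ) = L j - 1 :=
      exists_of_one_le_layerSize (h.2.1 ⟨(L j : ℕ) - 1, by omega⟩)
    have hj₁j : j₁ ≠ j := fun e => by subst e; omega
    refine ⟨(L j : ℕ) - 1, {j}, {j, j₁}, by simpa, ?_, by simp [hitPoint],
      by simp [hitPoint], ?_, ?_⟩
    · simp only [mem_insert, mem_singleton, forall_eq_or_imp, forall_eq]; omega
    · rw [Nat.sub_add_cancel (by omega)]
      exact h.apply_hitPoint hjr.le (by simp) fun _ => ⟨j, by simp, rfl⟩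
    · refine h.apply_hitPoint (by omega) ?_ fun _ => ⟨j₁, by simp, hj₁⟩
      simp only [mem_insert, mem_singleton, forall_eq_or_imp, forall_eq, hj₁]
      omega
  · obtain ⟨j₂, hj₂, hj₂j⟩ := exists_mem_ne h.2.2.1 j
    have hj₂' : (L j₂ : ℕ) = r - 1 := (mem_filter.mp hj₂).2
    refine ⟨r - 1, ∅, {j₂}, by simp, by simpa [hj₂'] using by omega,
      by simp [hitPoint, ZMod.two_eq_add_one_of_ne hα], ?_, ?_, ?_⟩
    · simp [hitPoint, Ne.symm hj₂j, ZMod.two_eq_add_one_of_ne hα]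
    · rw [Nat.sub_add_cancel (by omega)]
      exact h.apply_hitPoint le_rfl (by simp) (by simp)
    · exact h.apply_hitPoint (by omega) (fun k hk => by rw [mem_singleton.mp hk, hj₂'])
        fun _ => ⟨j₂, by simp, hj₂'⟩

lemma IsLayeredForm.canalizesOn_passesLayers_iff (h : IsLayeredForm f L a b) {i : ℕ} {j : Fin n}
    (hj : i ≤ (L j : ℕ)) {α : ZMod 2} :
    CanalizesOn f (PassesLayers L a i) j α ↔ (L j : ℕ) = i ∧ α = a j := by
  constructor
  · intro hcan
    by_contra hne
    obtain ⟨c, S, T, hSi, hTi, hSj, hTj, hfS, hfT⟩ := h.exists_hitPoints_of_ne hj hne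
    exact ZMod.two_natCast_succ_add_ne c b <| hfS.symm.trans <|
      (hcan _ _ (passesLayers_hitPoint hSi) (passesLayers_hitPoint hTi) hSj hTj).trans hfT
  · rintro ⟨hLj, rfl⟩ x y hx hy hxj hyj
    have hir : i ≤ r := by have := (L j).isLt; omega
    rw [h.apply_eq hir hx fun _ => ⟨j, hLj, hxj⟩, h.apply_eq hir hy fun _ => ⟨j, hLj, hyj⟩]

end LayeredForm

section Uniqueness

variable {n r r' : ℕ} {f : (Fin n → ZMod 2) → ZMod 2} {L : Fin n → Fin r} {L' : Fin n → Fin r'}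
  {a a' : Fin n → ZMod 2} {b b' : ZMod 2}

lemma passesLayers_eq_of_agree {i : ℕ} (hlt : ∀ j, (L j : ℕ) < i ↔ (L' j : ℕ) < i)
    (ha : ∀ j, (L j : ℕ) < i → a j = a' j) : PassesLayers L a i = PassesLayers L' a' i := by
  ext x
  refine forall_congr' fun j => ⟨fun hx hj => ?_, fun hx hj => ?_⟩
  · rw [← ha j ((hlt j).2 hj)]; exact hx ((hlt j).2 hj)
  · rw [ha j hj]; exact hx ((hlt j).1 hj)

lemma IsLayeredForm.layer_eq_of_agree (h : IsLayeredForm f L a b)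
    (h' : IsLayeredForm f L' a' b') {i : ℕ} (hlt : ∀ j, (L j : ℕ) < i ↔ (L' j : ℕ) < i)
    (ha : ∀ j, (L j : ℕ) < i → a j = a' j) {j : Fin n} (hj : (L j : ℕ) = i) :
    (L' j : ℕ) = i ∧ a j = a' j := by
  have hcan := (h.canalizesOn_passesLayers_iff hj.ge).2 ⟨hj, rfl⟩
  rw [passesLayers_eq_of_agree hlt ha] at hcan
  have h'j : i ≤ (L' j : ℕ) := not_lt.mp fun h'j => by have := (hlt j).2 h'j; omega
  exact (h'.canalizesOn_passesLayers_iff h'j).1 hcan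

lemma IsLayeredForm.agree_below (h : IsLayeredForm f L a b) (h' : IsLayeredForm f L' a' b') (i : ℕ)
    (j : Fin n) : ((L j : ℕ) < i ↔ (L' j : ℕ) < i) ∧ ((L j : ℕ) < i → a j = a' j) := by
  induction i generalizing j with
  | zero => simp
  | succ i ih =>
    have hlt j := (ih j).1
    have ha j := (ih j).2
    have hlt' j : (L' j : ℕ) < i ↔ (L j : ℕ) < i := (hlt j).symm
    have ha' j (hj : (L' j : ℕ) < i) : a' j = a j := (ha j ((hlt j).2 hj)).symm
    rcases lt_trichotomy (L j : ℕ) i with hj | hj | hj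
    · exact ⟨by have := (hlt j).1 hj; omega, fun _ => ha j hj⟩
    · obtain ⟨h'j, haj⟩ := h.layer_eq_of_agree h' hlt ha hj
      exact ⟨by omega, fun _ => haj⟩
    · refine ⟨⟨by omega, fun h'j => ?_⟩, by omega⟩
      have : i ≤ (L' j : ℕ) := not_lt.mp fun h'j => by have := (hlt j).2 h'j; omega
      have := (h'.layer_eq_of_agree h hlt' ha' (j := j) (by omega)).1
      omega

lemma IsLayeredForm.numLayers_le (h : IsLayeredForm f L a b)
    (h' : IsLayeredForm f L' a' b') : r ≤ r' := by
  obtain ⟨j, hj⟩ : ∃ j, (L j : ℕ) = r - 1 := exists_of_one_le_layerSize (by linarith [h.2.2.1])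
  have := (h.agree_below h' (L' j + 1) j).1.2 (by omega)
  have := h.1
  have := (L' j).isLt
  omega

theorem IsLayeredForm.unique (h : IsLayeredForm f L a b) (h' : IsLayeredForm f L' a' b') :
    (⟨r, L, a, b⟩ : Σ r, (Fin n → Fin r) × (Fin n → ZMod 2) × ZMod 2) = ⟨r', L', a', b'⟩ := by
  obtain rfl : r = r' := (h.numLayers_le h').antisymm (h'.numLayers_le h)
  obtain rfl : L = L' := funext fun j => Fin.ext <| by
    have := (h.agree_below h' (L j + 1) j).1.1 (by omega)
    have := (h.agree_below h' (L' j + 1) j).1.2 (by omega)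
    omega
  obtain rfl : a = a' := funext fun j => (h.agree_below h' (L j + 1) j).2 (by omega)
  obtain rfl : b = b' := add_left_cancel ((h.2.2.2 a).symm.trans (h'.2.2.2 a))
  rfl

end Uniqueness

section Counting

variable {n r : ℕ}

lemma layerSize_eq_card_fiber (L : Fin n → Fin r) (i : Fin r) :
    layerSize L i = Fintype.card {j // L j = i} := by
  simp [layerSize, Fintype.card_subtype, Fin.val_inj]

lemma sum_layerSize (L : Fin n → Fin r) : ∑ i : Fin r, layerSize L i = n := by
  simp_rw [layerSize_eq_card_fiber, ← Fintype.card_sigma]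
  simpa using Fintype.card_congr (sigmaFiberEquiv L)

lemma card_filter_layerSize (P : (Fin r → ℕ) → Prop) [DecidablePred P] :
    #{L : Fin n → Fin r | P fun i => layerSize L i} =
      ∑ k ∈ (Finset.Nat.antidiagonalTuple r n).filter P, Nat.multinomial univ k := by
  rw [card_eq_sum_card_fiberwise (f := fun L (i : Fin r) => layerSize L i)
    (t := (Finset.Nat.antidiagonalTuple r n).filter P) fun L hL =>
      mem_filter.mpr ⟨Finset.Nat.mem_antidiagonalTuple.mpr (sum_layerSize L), (mem_filter.mp hL).2⟩]
  refine sum_congr rfl fun k hk => ?_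
  obtain ⟨hkn, hPk⟩ := mem_filter.mp hk
  rw [← card_filter_card_fiber_eq (α := Fin n) k
    (by rw [Fintype.card_fin]; exact Finset.Nat.mem_antidiagonalTuple.mp hkn)]
  congr 1
  ext L
  simp only [mem_filter, mem_univ, true_and, funext_iff, layerSize_eq_card_fiber]
  exact ⟨fun h => h.2, fun h => ⟨by simpa [layerSize_eq_card_fiber, h] using hPk, h⟩⟩

end Counting

section Assembly

variable {n r : ℕ}

def IsLayerSizes (r : ℕ) (k : Fin r → ℕ) : Prop :=
  (∀ i, 1 ≤ k i) ∧ ∀ i : Fin r, (i : ℕ) = r - 1 → 2 ≤ k i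

instance : DecidablePred (IsLayerSizes r) := fun _ => by unfold IsLayerSizes; infer_instance

def layeredFun (L : Fin n → Fin r) (a : Fin n → ZMod 2) (b : ZMod 2) :
    (Fin n → ZMod 2) → ZMod 2 :=
  fun x => nestVal (fun i => layerMon L a i x) r 0 + b

lemma isLayeredForm_iff {f : (Fin n → ZMod 2) → ZMod 2} {L : Fin n → Fin r}
    {a : Fin n → ZMod 2} {b : ZMod 2} :
    IsLayeredForm f L a b ↔
      1 ≤ r ∧ IsLayerSizes r (fun i => layerSize L i) ∧ f = layeredFun L a b := by
  refine and_congr_right fun hr => ?_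
  have hlast : (∀ i : Fin r, (i : ℕ) = r - 1 → 2 ≤ layerSize L i) ↔ 2 ≤ layerSize L (r - 1) :=
    ⟨fun h => h ⟨r - 1, by omega⟩ rfl, fun h i hi => hi ▸ h⟩
  rw [IsLayerSizes, hlast, funext_iff, and_assoc]
  rfl

lemma succ_le_of_isLayerSizes {k : Fin r → ℕ} (hr : 1 ≤ r) (hk : IsLayerSizes r k) :
    r + 1 ≤ ∑ i, k i := by
  obtain ⟨m, rfl⟩ : ∃ m, r = m + 1 := ⟨r - 1, by omega⟩
  rw [Fin.sum_univ_castSucc]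
  have := hk.2 (Fin.last m) (by simp)
  have := card_nsmul_le_sum univ (fun i => k (Fin.castSucc i)) 1 fun i _ => hk.1 _
  simp only [card_univ, Fintype.card_fin, smul_eq_mul, mul_one] at this
  omega

abbrev LayerParams (n : ℕ) := Σ r, (Fin n → Fin r) × (Fin n → ZMod 2) × ZMod 2

def layerParams (n : ℕ) : Finset (LayerParams n) :=
  (Icc 1 (n - 1)).sigma fun r =>
    univ.filter (fun L : Fin n → Fin r => IsLayerSizes r fun i => layerSize L i) ×ˢ univ

def LayerParams.toFun (p : LayerParams n) : (Fin n → ZMod 2) → ZMod 2 :=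
  layeredFun p.2.1 p.2.2.1 p.2.2.2

lemma isLayeredForm_of_mem_layerParams {p : LayerParams n} (hp : p ∈ layerParams n) :
    IsLayeredForm p.toFun p.2.1 p.2.2.1 p.2.2.2 := by
  simp only [layerParams, mem_sigma, mem_Icc, mem_product, mem_filter, mem_univ, true_and,
    and_true] at hp
  exact isLayeredForm_iff.2 ⟨hp.1.1, hp.2, rfl⟩

lemma mem_image_layerParams {f : (Fin n → ZMod 2) → ZMod 2} :
    f ∈ (layerParams n).image LayerParams.toFun ↔
      ∃ (r : ℕ) (L : Fin n → Fin r) (a : Fin n → ZMod 2) (b : ZMod 2), IsLayeredForm f L a b := by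
  rw [mem_image]
  constructor
  · rintro ⟨p, hp, rfl⟩
    exact ⟨_, _, _, _, isLayeredForm_of_mem_layerParams hp⟩
  · rintro ⟨r, L, a, b, h⟩
    obtain ⟨hr, hsizes, rfl⟩ := isLayeredForm_iff.1 h
    have := succ_le_of_isLayerSizes hr hsizes
    rw [sum_layerSize] at this
    refine ⟨⟨r, L, a, b⟩, ?_, rfl⟩
    simp only [layerParams, mem_sigma, mem_Icc, mem_product, mem_filter, mem_univ, hsizes,
      and_self, and_true]
    omega

lemma card_layerParams (n : ℕ) :
    #(layerParams n) = 2 ^ (n + 1) * ∑ r ∈ Icc 1 (n - 1),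
      ∑ k ∈ (Finset.Nat.antidiagonalTuple r n).filter (IsLayerSizes r),
        Nat.multinomial univ k := by
  simp only [layerParams, card_sigma, card_product, card_filter_layerSize, card_univ,
    Fintype.card_prod, Fintype.card_fun, ZMod.card, Fintype.card_fin]
  rw [← sum_mul, mul_comm, pow_succ]

end Assembly

theorem statement9_general (n : ℕ) :
    Nat.card {f : (Fin n → ZMod 2) → ZMod 2 //
        ∃ (r : ℕ) (L : Fin n → Fin r) (a : Fin n → ZMod 2) (b : ZMod 2),
          IsLayeredForm f L a b} =
      2 ^ (n + 1) *
        ∑ r ∈ Finset.Icc 1 (n - 1),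
          ∑ k ∈ (Finset.Nat.antidiagonalTuple r n).filter
              (fun k => (∀ i, 1 ≤ k i) ∧ ∀ i : Fin r, (i : ℕ) = r - 1 → 2 ≤ k i),
            Nat.multinomial Finset.univ k := by
  calc _ = #((layerParams n).image LayerParams.toFun) := by
        rw [← Nat.card_eq_finsetCard]
        exact Nat.card_congr (Equiv.subtypeEquivRight fun f => mem_image_layerParams.symm)
    _ = #(layerParams n) := card_image_of_injOn fun p hp q hq hpq =>
        (isLayeredForm_of_mem_layerParams hp).unique
          (hpq ▸ isLayeredForm_of_mem_layerParams hq)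
    _ = _ := card_layerParams n

/-- The total number of nested canalizing functions in `n` essential
variables (n ≥ 2) is `2^{n+1} · Σ_{r=1}^{n−1} Σ n!/(k₁!⋯k_r!)`, the inner sum
being over all tuples of positive integers `(k₁,…,k_r)` with
`k₁ + ⋯ + k_r = n` and `k_r ≥ 2`. -/
theorem statement9 (n : ℕ) (hn : 2 ≤ n) :
    Nat.card {f : (Fin n → ZMod 2) → ZMod 2 //
        ∃ (r : ℕ) (L : Fin n → Fin r) (a : Fin n → ZMod 2) (b : ZMod 2),
          IsLayeredForm f L a b} =
      2 ^ (n + 1) *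
        ∑ r ∈ Finset.Icc 1 (n - 1),
          ∑ k ∈ (Finset.Nat.antidiagonalTuple r n).filter
              (fun k => (∀ i, 1 ≤ k i) ∧ ∀ i : Fin r, (i : ℕ) = r - 1 → 2 ≤ k i),
            Nat.multinomial Finset.univ k :=
  statement9_general n
end
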